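/- Let biG = (𝒩, ℰ, ℰ′) be a bilevel graph on 𝒩 = {1,…,N} with N ≥ 2, let A_1, …, A_N be maximal monotone operators on a real Hilbert space H with zer(A_1 + ⋯ + A_N) ≠ ∅, let σ > 0 and θ_k ∈ [ε, 2 − ε] for some 0 < ε < 1, and let (x^k), (a^k), (w^k) be generated by the graph-based Douglas–Rachford iteration. Then, as k → ∞, Var(x^k) = o(k^{−1}) and ‖Σ_{i=1}^N a_i^k‖² = o(k^{−1}); in particular Σ_{i=1}^N a_i^k converges strongly to 0. -/

import Mathlib

open scoped InnerProductSpace Topology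
open Filter

noncomputable section

/-- The simple (undirected) graph induced by a set of directed edges on `Fin N`. -/
def graphOf {N : ℕ} (E : Finset (Fin N × Fin N)) : SimpleGraph (Fin N) where
  Adj i j := i ≠ j ∧ ((i, j) ∈ E ∨ (j, i) ∈ E)
  symm := ⟨fun i j h => ⟨h.1.symm, h.2.symm⟩⟩
  loopless := ⟨fun i h => h.1 rfl⟩

/-- Degree of node `i` in the undirected graph induced by `E`: number of adjacent nodes. -/
def degE {N : ℕ} (E : Finset (Fin N × Fin N)) (i : Fin N) : ℕ :=
  (Finset.univ.filter (fun j => j ≠ i ∧ ((i, j) ∈ E ∨ (j, i) ∈ E))).card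

/-- The graph Laplacian of the graph induced by `E`. -/
def lapE {N : ℕ} (E : Finset (Fin N × Fin N)) : Matrix (Fin N) (Fin N) ℝ :=
  fun i j =>
    if i = j then (degE E i : ℝ)
    else if (i, j) ∈ E ∨ (j, i) ∈ E then -1 else 0

/-- The skew-symmetric matrix `Σ` built from the Laplacian of the base graph. -/
def sigmaE {N : ℕ} (E' : Finset (Fin N × Fin N)) : Matrix (Fin N) (Fin N) ℝ :=
  fun i j => if i < j then -(lapE E' i j) else if j < i then lapE E' i j else 0

/-- The matrix `P^{ij}`. -/
def pijM (N : ℕ) (i j : Fin N) : Matrix (Fin N) (Fin N) ℝ :=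
  fun h k =>
    if h = i ∧ k = i then 1
    else if h = j ∧ k = j then 1
    else if h = j ∧ k = i then -2 else 0

/-- The matrix `P = ∑_{(i,j) ∈ ℰ∖ℰ′} P^{ij}`. -/
def pE {N : ℕ} (E E' : Finset (Fin N × Fin N)) : Matrix (Fin N) (Fin N) ℝ :=
  ∑ e ∈ E \ E', pijM N e.1 e.2

/-- The block operator `Q ⊗ I : H^M → H^N` induced by a matrix `Q ∈ ℝ^{N×M}`. -/
def matVecH {H : Type*} [NormedAddCommGroup H] [InnerProductSpace ℝ H] {N M : ℕ}
    (Q : Matrix (Fin N) (Fin M) ℝ) (x : Fin M → H) : Fin N → H :=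
  fun h => ∑ k, Q h k • x k

/-- `(E, E')` forms a bilevel graph: the state graph `(𝒩, E)` is connected with a topological
ordering, and the base graph `(𝒩, E')` is a connected subgraph. -/
structure IsBilevel {N : ℕ} (E E' : Finset (Fin N × Fin N)) : Prop where
  base_subset : E' ⊆ E
  topo : ∀ e ∈ E, e.1 < e.2
  state_conn : (graphOf E).Connected
  base_conn : (graphOf E').Connected

/-- `Z` gives an onto decomposition of the Laplacian of the base graph `E'`:
`L = Z Zᵀ` and `ker Zᵀ = span{(1,…,1)}`. -/
def ZOnto {N : ℕ} (E' : Finset (Fin N × Fin N)) (Z : Matrix (Fin N) (Fin (N - 1)) ℝ) : Prop :=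
  Z * Z.transpose = lapE E' ∧
  ∀ v : Fin N → ℝ, Z.transpose.mulVec v = 0 ↔ ∃ c : ℝ, v = fun _ => c

/-- The graph-based Douglas–Rachford iteration: `a_i^{k+1} ∈ A_i x_i^{k+1}`,
`(L⊗I)x^{k+1} + ((Σ+P)⊗I)x^{k+1} + σ a^{k+1} = (Z⊗I)w^k` and
`w^{k+1} = w^k − θ_k (Zᵀ⊗I)x^{k+1}`. -/
structure IsGDR {H : Type*} [NormedAddCommGroup H] [InnerProductSpace ℝ H] {N : ℕ}
    (E E' : Finset (Fin N × Fin N)) (Z : Matrix (Fin N) (Fin (N - 1)) ℝ)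
    (A : Fin N → H → Set H) (σ : ℝ) (θ : ℕ → ℝ)
    (x : ℕ → Fin N → H) (a : ℕ → Fin N → H) (w : ℕ → Fin (N - 1) → H) : Prop where
  mem : ∀ k i, a (k + 1) i ∈ A i (x (k + 1) i)
  res : ∀ k, matVecH (lapE E' + sigmaE E' + pE E E') (x (k + 1)) + σ • a (k + 1)
          = matVecH Z (w k)
  upd : ∀ k, w (k + 1) = w k - θ k • matVecH Z.transpose (x (k + 1))

/-- A set-valued operator on a real inner product space is monotone. -/
def IsMonotoneOp {K : Type*} [NormedAddCommGroup K] [InnerProductSpace ℝ K]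
    (A : K → Set K) : Prop :=
  ∀ x y u v : K, u ∈ A x → v ∈ A y → 0 ≤ ⟪u - v, x - y⟫_ℝ

/-- A set-valued operator is maximal monotone. -/
def IsMaxMonotone {K : Type*} [NormedAddCommGroup K] [InnerProductSpace ℝ K]
    (A : K → Set K) : Prop :=
  IsMonotoneOp A ∧ ∀ x u : K, (∀ y v : K, v ∈ A y → 0 ≤ ⟪u - v, x - y⟫_ℝ) → u ∈ A x

/-- `zer (A_1 + ⋯ + A_N) ≠ ∅`. -/
def SumZerNonempty {H : Type*} [NormedAddCommGroup H] [InnerProductSpace ℝ H] {N : ℕ}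
    (A : Fin N → H → Set H) : Prop :=
  ∃ (xs : H) (b : Fin N → H), (∀ i, b i ∈ A i xs) ∧ ∑ i, b i = 0

/-- Weak convergence of a sequence in an inner product space. -/
def WeakLim {K : Type*} [NormedAddCommGroup K] [InnerProductSpace ℝ K]
    (u : ℕ → K) (l : K) : Prop :=
  ∀ h : K, Tendsto (fun k => ⟪u k, h⟫_ℝ) atTop (𝓝 ⟪l, h⟫_ℝ)

/-- The state variance `Var(x) = (1/N) ∑_i ‖x_i − x̄‖²`. -/
def stateVar {H : Type*} [NormedAddCommGroup H] [InnerProductSpace ℝ H] {N : ℕ}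
    (x : Fin N → H) : ℝ :=
  (N : ℝ)⁻¹ * ∑ i, ‖x i - (N : ℝ)⁻¹ • ∑ j, x j‖ ^ 2

/-- In-degree `d_i⁺ = #{h : (h,i) ∈ E}` of node `i`. -/
def inDeg {N : ℕ} (E : Finset (Fin N × Fin N)) (i : Fin N) : ℕ :=
  (Finset.univ.filter (fun h => (h, i) ∈ E)).card

/-- Out-degree `d_i⁻ = #{h : (i,h) ∈ E}` of node `i`. -/
def outDeg {N : ℕ} (E : Finset (Fin N × Fin N)) (i : Fin N) : ℕ :=
  (Finset.univ.filter (fun h => (i, h) ∈ E)).card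

/-- The unbalance `U_G = sqrt((1/N) ∑_i (d_i⁻ − d_i⁺)²)` of the state graph. -/
def unbalance {N : ℕ} (E : Finset (Fin N × Fin N)) : ℝ :=
  Real.sqrt ((N : ℝ)⁻¹ * ∑ i, ((outDeg E i : ℝ) - (inDeg E i : ℝ)) ^ 2)

end

/-!
The iteration is a relaxed fixed-point iteration `w ↦ w - θ (Zᵀ ⊗ I) x` in which `w ↦ (Zᵀ ⊗ I) x`
is firmly nonexpansive: pairing the defining equation of two iterates with the difference of their
states, monotonicity of the `A_i`, skew-symmetry of `Σ` and `⟪P u, u⟫ = ∑ ‖u_i - u_j‖² ≥ 0` give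
`‖Zᵀ(x - x')‖² ≤ ⟪Zᵀ(x - x'), w - w'⟫`. Against a fixed point `w*` this makes `‖w^k - w*‖²`
decrease by at least `ε (2 - ε) ‖Zᵀ x^{k+1}‖²` per step, so `‖Zᵀ x^{k+1}‖²` is summable; along the
iteration it makes it nonincreasing, hence `o(1/k)`. Finally, because `ker Zᵀ` consists of the
constant vectors and the entries of `L + Σ + P` sum to zero, both `x^{k+1} - x̄^{k+1}` and
`σ ∑ a_i^{k+1}` are fixed linear images of `Zᵀ x^{k+1}`.
-/

open Finset
open scoped Matrix

section BlockOperator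

variable {H : Type*} [NormedAddCommGroup H] [InnerProductSpace ℝ H]

lemma matVecH_add {n m : ℕ} (Q R : Matrix (Fin n) (Fin m) ℝ) (u : Fin m → H) :
    matVecH (Q + R) u = matVecH Q u + matVecH R u := by
  funext h
  simp [matVecH, add_smul, sum_add_distrib]

lemma matVecH_sub {n m : ℕ} (Q : Matrix (Fin n) (Fin m) ℝ) (u v : Fin m → H) :
    matVecH Q (u - v) = matVecH Q u - matVecH Q v := by
  funext h
  simp [matVecH, smul_sub, sum_sub_distrib]

lemma matVecH_mul {n m p : ℕ} (Q : Matrix (Fin n) (Fin m) ℝ) (R : Matrix (Fin m) (Fin p) ℝ)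
    (u : Fin p → H) : matVecH (Q * R) u = matVecH Q (matVecH R u) := by
  funext h
  simp only [matVecH, Matrix.mul_apply, sum_smul, smul_sum, smul_smul]
  exact sum_comm

lemma matVecH_const {n m : ℕ} (Q : Matrix (Fin n) (Fin m) ℝ) (y : H) :
    matVecH Q (fun _ => y) = fun h => (∑ k, Q h k) • y := by
  funext h
  simp [matVecH, sum_smul]

lemma sum_matVecH {n m : ℕ} (Q : Matrix (Fin n) (Fin m) ℝ) (u : Fin m → H) :
    ∑ h, matVecH Q u h = ∑ k, (∑ h, Q h k) • u k := by
  simp only [matVecH, sum_smul]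
  exact sum_comm

lemma sum_inner_matVecH {n m : ℕ} (Q : Matrix (Fin n) (Fin m) ℝ) (v : Fin m → H)
    (u : Fin n → H) :
    ∑ h, ⟪matVecH Q v h, u h⟫_ℝ = ∑ k, ⟪v k, matVecH Q.transpose u k⟫_ℝ := by
  simp only [matVecH, sum_inner, inner_sum, real_inner_smul_left, real_inner_smul_right,
    Matrix.transpose_apply]
  exact sum_comm

end BlockOperator

def blockQuad {H : Type*} [NormedAddCommGroup H] [InnerProductSpace ℝ H] {n : ℕ}
    (Q : Matrix (Fin n) (Fin n) ℝ) (u : Fin n → H) : ℝ :=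
  ∑ h, ⟪matVecH Q u h, u h⟫_ℝ

section BlockQuad

variable {H : Type*} [NormedAddCommGroup H] [InnerProductSpace ℝ H] {n : ℕ}

lemma blockQuad_add (Q R : Matrix (Fin n) (Fin n) ℝ) (u : Fin n → H) :
    blockQuad (Q + R) u = blockQuad Q u + blockQuad R u := by
  simp [blockQuad, matVecH_add, inner_add_left, sum_add_distrib]

lemma blockQuad_sum {ι : Type*} (s : Finset ι) (Q : ι → Matrix (Fin n) (Fin n) ℝ)
    (u : Fin n → H) : blockQuad (∑ e ∈ s, Q e) u = ∑ e ∈ s, blockQuad (Q e) u := by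
  classical
  induction s using Finset.induction_on with
  | empty => simp [blockQuad, matVecH]
  | insert e s he ih => rw [sum_insert he, sum_insert he, blockQuad_add, ih]

lemma blockQuad_eq_sum (Q : Matrix (Fin n) (Fin n) ℝ) (u : Fin n → H) :
    blockQuad Q u = ∑ h, ∑ k, Q h k * ⟪u k, u h⟫_ℝ := by
  simp [blockQuad, matVecH, sum_inner, real_inner_smul_left]

lemma blockQuad_single (i j : Fin n) (c : ℝ) (u : Fin n → H) :
    blockQuad (Matrix.single i j c) u = c * ⟪u j, u i⟫_ℝ := by
  simp [blockQuad_eq_sum, Matrix.single_apply, ite_and]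

lemma blockQuad_mul_transpose {m : ℕ} (Z : Matrix (Fin n) (Fin m) ℝ) (u : Fin n → H) :
    blockQuad (Z * Z.transpose) u = ∑ t, ‖matVecH Z.transpose u t‖ ^ 2 := by
  simp only [blockQuad, matVecH_mul, sum_inner_matVecH, real_inner_self_eq_norm_sq]

lemma blockQuad_eq_zero_of_transpose_eq_neg {Q : Matrix (Fin n) (Fin n) ℝ}
    (hQ : Q.transpose = -Q) (u : Fin n → H) : blockQuad Q u = 0 := by
  have hQ' (i j : Fin n) : Q j i = -Q i j := by simpa using congrFun (congrFun hQ i) j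
  have hswap : blockQuad Q u = -blockQuad Q u := by
    rw [blockQuad_eq_sum]
    nth_rewrite 1 [sum_comm]
    rw [← sum_neg_distrib]
    refine sum_congr rfl fun h _ => ?_
    rw [← sum_neg_distrib]
    refine sum_congr rfl fun k _ => ?_
    rw [hQ' h k, real_inner_comm]
    ring
  linarith

end BlockQuad

section GraphMatrices

variable {N : ℕ}

lemma lapE_transpose (E : Finset (Fin N × Fin N)) : (lapE E).transpose = lapE E := by
  ext i j
  simp only [Matrix.transpose_apply, lapE]
  by_cases h : i = j
  · subst h; rfl
  · rw [if_neg (Ne.symm h), if_neg h]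
    exact if_congr or_comm rfl rfl

lemma sigmaE_transpose (E : Finset (Fin N × Fin N)) :
    (sigmaE E).transpose = -sigmaE E := by
  ext i j
  have hL : lapE E j i = lapE E i j := by rw [← Matrix.transpose_apply (lapE E), lapE_transpose]
  simp only [Matrix.transpose_apply, sigmaE, Matrix.neg_apply]
  rcases lt_trichotomy i j with h | rfl | h
  · rw [if_neg (asymm h), if_pos h, if_pos h, hL, neg_neg]
  · simp
  · rw [if_pos h, if_neg (asymm h), if_pos h, hL]

lemma pijM_eq_single {i j : Fin N} (hij : i ≠ j) :
    pijM N i j = Matrix.single i i 1 + Matrix.single j j 1 + Matrix.single j i (-2) := by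
  ext h k
  simp only [pijM, Matrix.add_apply, Matrix.single_apply]
  by_cases hi : h = i <;> by_cases hj : h = j <;> by_cases hk : k = i <;> by_cases hk' : k = j <;>
    simp_all [eq_comm]

variable {H : Type*} [NormedAddCommGroup H] [InnerProductSpace ℝ H]

lemma blockQuad_pijM {i j : Fin N} (hij : i ≠ j) (u : Fin N → H) :
    blockQuad (pijM N i j) u = ‖u i - u j‖ ^ 2 := by
  rw [pijM_eq_single hij, blockQuad_add, blockQuad_add, blockQuad_single, blockQuad_single,
    blockQuad_single, norm_sub_sq_real, real_inner_self_eq_norm_sq, real_inner_self_eq_norm_sq]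
  ring

lemma blockQuad_lapE_add_sigmaE_add_pE {m : ℕ} {E E' : Finset (Fin N × Fin N)}
    {Z : Matrix (Fin N) (Fin m) ℝ} (hZ : Z * Z.transpose = lapE E')
    (hE : ∀ e ∈ E, e.1 ≠ e.2) (u : Fin N → H) :
    blockQuad (lapE E' + sigmaE E' + pE E E') u
      = ∑ t, ‖matVecH Z.transpose u t‖ ^ 2 + ∑ e ∈ E \ E', ‖u e.1 - u e.2‖ ^ 2 := by
  rw [blockQuad_add, blockQuad_add, ← hZ, blockQuad_mul_transpose,
    blockQuad_eq_zero_of_transpose_eq_neg (sigmaE_transpose E'), add_zero, pE, blockQuad_sum]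
  exact congrArg _ (sum_congr rfl fun e he => blockQuad_pijM (hE e (mem_sdiff.mp he).1) u)

end GraphMatrices

noncomputable def meanMatrix (N : ℕ) : Matrix (Fin N) (Fin N) ℝ := Matrix.of fun _ _ => (N : ℝ)⁻¹

noncomputable def centering (N : ℕ) : Matrix (Fin N) (Fin N) ℝ := 1 - meanMatrix N

def KerTransposeEqConst {N m : ℕ} (Z : Matrix (Fin N) (Fin m) ℝ) : Prop :=
  ∀ v : Fin N → ℝ, Z.transpose.mulVec v = 0 ↔ ∃ c : ℝ, v = fun _ => c

section Centering

variable {N : ℕ}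

lemma centering_transpose : (centering N).transpose = centering N := by
  ext i j
  simp [centering, meanMatrix, Matrix.one_apply, eq_comm]

lemma matVecH_centering {H : Type*} [NormedAddCommGroup H] [InnerProductSpace ℝ H]
    (u : Fin N → H) : matVecH (centering N) u = fun i => u i - (N : ℝ)⁻¹ • ∑ j, u j := by
  funext i
  simp [centering, meanMatrix, matVecH, sub_smul, sum_sub_distrib, Matrix.one_apply, ite_smul,
    smul_sum]

lemma stateVar_eq_centering {H : Type*} [NormedAddCommGroup H] [InnerProductSpace ℝ H]
    (u : Fin N → H) :
    stateVar u = (N : ℝ)⁻¹ * ∑ i, ‖matVecH (centering N) u i‖ ^ 2 := by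
  rw [matVecH_centering, stateVar]

lemma stateVar_nonneg {H : Type*} [NormedAddCommGroup H] [InnerProductSpace ℝ H]
    (u : Fin N → H) : 0 ≤ stateVar u := by
  unfold stateVar
  positivity

variable {m : ℕ} {Z : Matrix (Fin N) (Fin m) ℝ}

lemma KerTransposeEqConst.sum_col_eq_zero (hker : KerTransposeEqConst Z) (t : Fin m) :
    ∑ i, Z i t = 0 := by
  simpa [Matrix.mulVec, dotProduct] using congrFun ((hker _).mpr ⟨1, rfl⟩) t

lemma isUnit_mul_transpose_add_meanMatrix (hN : N ≠ 0) (hker : KerTransposeEqConst Z) :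
    IsUnit (Z * Z.transpose + meanMatrix N) := by
  have hN' : (0 : ℝ) < N := Nat.cast_pos.mpr (Nat.pos_of_ne_zero hN)
  have hquad (v : Fin N → ℝ) : v ⬝ᵥ ((Z * Z.transpose + meanMatrix N) *ᵥ v)
      = (Z.transpose *ᵥ v) ⬝ᵥ (Z.transpose *ᵥ v) + (N : ℝ)⁻¹ * (∑ i, v i) ^ 2 := by
    rw [Matrix.add_mulVec, dotProduct_add, ← Matrix.mulVec_mulVec, Matrix.dotProduct_mulVec,
      ← Matrix.mulVec_transpose]
    simp [meanMatrix, dotProduct, Matrix.mulVec, ← mul_sum, ← sum_mul, sq]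
    ring
  refine Matrix.mulVec_injective_iff_isUnit.mp fun v w hvw => sub_eq_zero.mp ?_
  set d := v - w
  have h0 := hquad d
  rw [Matrix.mulVec_sub, hvw, sub_self, dotProduct_zero] at h0
  have hZd : Z.transpose *ᵥ d = 0 := by
    have hnn : 0 ≤ Z.transpose *ᵥ d ⬝ᵥ Z.transpose *ᵥ d := sum_nonneg fun i _ => mul_self_nonneg _
    rw [← dotProduct_self_eq_zero]
    nlinarith [sq_nonneg (∑ i, d i), inv_pos.mpr hN']
  obtain ⟨c, hc⟩ := (hker d).mp hZd
  rw [hZd, dotProduct_zero, zero_add, hc] at h0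
  simp only [sum_const, card_univ, Fintype.card_fin, nsmul_eq_mul] at h0
  rw [hc, show c = 0 by simpa [hN'.ne'] using h0]
  rfl

lemma mul_transpose_add_meanMatrix_mul_meanMatrix (hN : N ≠ 0)
    (hker : KerTransposeEqConst Z) :
    (Z * Z.transpose + meanMatrix N) * meanMatrix N = meanMatrix N := by
  ext i j
  simp only [meanMatrix, Matrix.mul_apply, Matrix.add_apply, Matrix.of_apply,
    Matrix.transpose_apply, ← sum_mul, sum_add_distrib]
  rw [sum_comm]
  simp [← mul_sum, hker.sum_col_eq_zero, hN]

lemma exists_mul_transpose_eq_centering (hN : N ≠ 0)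
    (hker : KerTransposeEqConst Z) :
    ∃ K : Matrix (Fin N) (Fin m) ℝ, K * Z.transpose = centering N := by
  set R := Z * Z.transpose + meanMatrix N with hR
  have hdet := (Matrix.isUnit_iff_isUnit_det R).mp (isUnit_mul_transpose_add_meanMatrix hN hker)
  have hinv : R⁻¹ * meanMatrix N = meanMatrix N :=
    calc R⁻¹ * meanMatrix N = R⁻¹ * (R * meanMatrix N) := by
          rw [mul_transpose_add_meanMatrix_mul_meanMatrix hN hker]
      _ = meanMatrix N := by rw [← Matrix.mul_assoc, Matrix.nonsing_inv_mul _ hdet, Matrix.one_mul]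
  refine ⟨R⁻¹ * Z, ?_⟩
  rw [Matrix.mul_assoc, show Z * Z.transpose = R - meanMatrix N by rw [hR, add_sub_cancel_right],
    Matrix.mul_sub, Matrix.nonsing_inv_mul _ hdet, hinv]
  rfl

end Centering

section Iteration

variable {H : Type*} [NormedAddCommGroup H] [InnerProductSpace ℝ H] {N m : ℕ}

lemma KerTransposeEqConst.sum_matVecH_eq_zero {Z : Matrix (Fin N) (Fin m) ℝ}
    (hker : KerTransposeEqConst Z) (w : Fin m → H) : ∑ i, matVecH Z w i = 0 := by
  simp [sum_matVecH, hker.sum_col_eq_zero]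

lemma KerTransposeEqConst.matVecH_transpose_const {Z : Matrix (Fin N) (Fin m) ℝ}
    (hker : KerTransposeEqConst Z) (y : H) : matVecH Z.transpose (fun _ => y) = 0 := by
  funext t
  simp [matVecH_const, hker.sum_col_eq_zero]

lemma sum_sum_lapE_add_sigmaE_add_pE_eq_zero {E E' : Finset (Fin N × Fin N)}
    {Z : Matrix (Fin N) (Fin (N - 1)) ℝ} (hZ : ZOnto E' Z) (hE : ∀ e ∈ E, e.1 ≠ e.2) :
    ∑ i, ∑ j, (lapE E' + sigmaE E' + pE E E') i j = 0 := by
  -- the total sum is the quadratic form at the constant vector `1 ∈ ℝ^N`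
  have h := blockQuad_lapE_add_sigmaE_add_pE hZ.1 hE (fun _ => (1 : ℝ))
  simpa [blockQuad_eq_sum, KerTransposeEqConst.matVecH_transpose_const hZ.2] using h

lemma matVecH_matVecH_transpose_of_sum_eq_zero {Z K : Matrix (Fin N) (Fin m) ℝ}
    (hK : K * Z.transpose = centering N) {v : Fin N → H} (hv : ∑ i, v i = 0) :
    matVecH Z (matVecH K.transpose v) = v := by
  have hZK : Z * K.transpose = centering N := by
    rw [← centering_transpose, ← hK, Matrix.transpose_mul, Matrix.transpose_transpose]
  rw [← matVecH_mul, hZK, matVecH_centering, hv]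
  simp

lemma sum_matVecH_centering {Q : Matrix (Fin N) (Fin N) ℝ} (hQ : ∑ i, ∑ j, Q i j = 0)
    (x : Fin N → H) : ∑ i, matVecH Q (matVecH (centering N) x) i = ∑ i, matVecH Q x i := by
  have hconst : ∑ i, matVecH Q (fun _ => (N : ℝ)⁻¹ • ∑ j, x j) i = 0 := by
    rw [matVecH_const, ← sum_smul, hQ, zero_smul]
  have hx : matVecH (centering N) x = x - fun _ => (N : ℝ)⁻¹ • ∑ j, x j := by
    rw [matVecH_centering]
    rfl
  rw [hx, matVecH_sub]
  simp only [Pi.sub_apply, sum_sub_distrib, hconst, sub_zero]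

end Iteration

section Bounds

variable {H : Type*} [NormedAddCommGroup H] [InnerProductSpace ℝ H] {N m : ℕ}

lemma norm_sum_smul_sq_le (c : Fin m → ℝ) (u : Fin m → H) :
    ‖∑ t, c t • u t‖ ^ 2 ≤ (∑ t, c t ^ 2) * ∑ t, ‖u t‖ ^ 2 := by
  have h : ‖∑ t, c t • u t‖ ≤ ∑ t, |c t| * ‖u t‖ :=
    (norm_sum_le _ _).trans_eq (sum_congr rfl fun t _ => by rw [norm_smul, Real.norm_eq_abs])
  calc ‖∑ t, c t • u t‖ ^ 2 ≤ (∑ t, |c t| * ‖u t‖) ^ 2 := by gcongr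
    _ ≤ (∑ t, |c t| ^ 2) * ∑ t, ‖u t‖ ^ 2 := sum_mul_sq_le_sq_mul_sq _ _ _
    _ = (∑ t, c t ^ 2) * ∑ t, ‖u t‖ ^ 2 := by simp only [sq_abs]

lemma stateVar_le {Z K : Matrix (Fin N) (Fin m) ℝ} (hK : K * Z.transpose = centering N)
    (x : Fin N → H) :
    stateVar x ≤ ((N : ℝ)⁻¹ * ∑ i, ∑ t, K i t ^ 2) * ∑ t, ‖matVecH Z.transpose x t‖ ^ 2 := by
  rw [stateVar_eq_centering, ← hK, matVecH_mul, mul_assoc, sum_mul]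
  gcongr with i
  exact norm_sum_smul_sq_le _ _

lemma norm_sum_sq_le_of_resolvent {Z K : Matrix (Fin N) (Fin m) ℝ}
    (hker : KerTransposeEqConst Z)
    (hK : K * Z.transpose = centering N) {M : Matrix (Fin N) (Fin N) ℝ}
    (hM : ∑ i, ∑ j, M i j = 0) {σ : ℝ} (hσ : 0 < σ) {x a : Fin N → H} {w : Fin m → H}
    (h : matVecH M x + σ • a = matVecH Z w) :
    ‖∑ i, a i‖ ^ 2 ≤ ((σ ^ 2)⁻¹ * ∑ t, (∑ i, (M * K) i t) ^ 2)
      * ∑ t, ‖matVecH Z.transpose x t‖ ^ 2 := by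
  have hsum : σ • ∑ i, a i = -∑ t, (∑ i, (M * K) i t) • matVecH Z.transpose x t := by
    have h' := congrArg (fun v => ∑ i, v i) h
    simp only [Pi.add_apply, Pi.smul_apply, sum_add_distrib, ← smul_sum,
      hker.sum_matVecH_eq_zero] at h'
    rw [← sum_matVecH, matVecH_mul, ← matVecH_mul K, hK, sum_matVecH_centering hM]
    exact eq_neg_of_add_eq_zero_right h'
  have hnorm : ‖∑ i, a i‖ ^ 2 = (σ ^ 2)⁻¹ * ‖σ • ∑ i, a i‖ ^ 2 := by
    rw [norm_smul, Real.norm_eq_abs, mul_pow, sq_abs, inv_mul_cancel_left₀ (by positivity)]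
  rw [hnorm, hsum, norm_neg, mul_assoc]
  gcongr
  exact norm_sum_smul_sq_le _ _

lemma norm_sq_le_inner_of_resolvent {A : Fin N → H → Set H} (hA : ∀ i, IsMonotoneOp (A i))
    {σ : ℝ} (hσ : 0 ≤ σ) {M : Matrix (Fin N) (Fin N) ℝ} {Z : Matrix (Fin N) (Fin m) ℝ}
    (hM : ∀ u : Fin N → H, ∑ t, ‖matVecH Z.transpose u t‖ ^ 2 ≤ blockQuad M u)
    {x₁ x₂ a₁ a₂ : Fin N → H} {w₁ w₂ : Fin m → H}
    (ha₁ : ∀ i, a₁ i ∈ A i (x₁ i)) (ha₂ : ∀ i, a₂ i ∈ A i (x₂ i))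
    (h₁ : matVecH M x₁ + σ • a₁ = matVecH Z w₁) (h₂ : matVecH M x₂ + σ • a₂ = matVecH Z w₂) :
    ‖WithLp.toLp 2 (matVecH Z.transpose x₁) - WithLp.toLp 2 (matVecH Z.transpose x₂)‖ ^ 2
      ≤ ⟪WithLp.toLp 2 (matVecH Z.transpose x₁) - WithLp.toLp 2 (matVecH Z.transpose x₂),
          WithLp.toLp 2 w₁ - WithLp.toLp 2 w₂⟫_ℝ := by
  have he : matVecH M (x₁ - x₂) + σ • (a₁ - a₂) = matVecH Z (w₁ - w₂) := by
    rw [matVecH_sub, matVecH_sub, ← h₁, ← h₂, smul_sub]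
    abel
  have hpair := congrArg (fun v => ∑ i, ⟪v i, (x₁ - x₂) i⟫_ℝ) he
  simp only [Pi.add_apply, Pi.smul_apply, inner_add_left, real_inner_smul_left,
    sum_add_distrib, ← mul_sum] at hpair
  rw [sum_inner_matVecH Z] at hpair
  have hmono : 0 ≤ ∑ i, ⟪(a₁ - a₂) i, (x₁ - x₂) i⟫_ℝ :=
    sum_nonneg fun i _ => (hA i) _ _ _ _ (ha₁ i) (ha₂ i)
  rw [← WithLp.toLp_sub, ← WithLp.toLp_sub, ← matVecH_sub, PiLp.norm_sq_eq_of_L2,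
    PiLp.inner_apply]
  simp only [real_inner_comm _ (matVecH _ _ _)]
  have hquad := hM (x₁ - x₂)
  rw [blockQuad] at hquad
  linarith [mul_nonneg hσ hmono]

end Bounds

section Rate

lemma tendsto_nat_mul_of_antitone_of_summable {f : ℕ → ℝ} (h0 : ∀ k, 0 ≤ f k)
    (hf : Antitone f) (hs : Summable f) : Tendsto (fun k : ℕ => (k : ℝ) * f k) atTop (𝓝 0) := by
  -- `(k - k/2) f k` is at most the tail sum of `f` from `k/2`, which tends to `0`.
  have htail : Tendsto (fun k : ℕ => 2 * ∑' j, f (j + k / 2)) atTop (𝓝 0) := by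
    simpa using ((tendsto_sum_nat_add f).comp (Nat.tendsto_div_const_atTop two_ne_zero)).const_mul 2
  refine squeeze_zero (fun k => mul_nonneg k.cast_nonneg (h0 k)) (fun k => ?_) htail
  have hblock : ((k - k / 2 : ℕ) : ℝ) * f k ≤ ∑' j, f (j + k / 2) :=
    calc ((k - k / 2 : ℕ) : ℝ) * f k = ∑ _j ∈ range (k - k / 2), f k := by simp
      _ ≤ ∑ j ∈ range (k - k / 2), f (j + k / 2) :=
          sum_le_sum fun j hj => hf (by have := mem_range.mp hj; omega)
      _ ≤ ∑' j, f (j + k / 2) :=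
          ((summable_nat_add_iff _).mpr hs).sum_le_tsum _ fun j _ => h0 _
  have hk : (k : ℝ) ≤ 2 * ((k - k / 2 : ℕ) : ℝ) := by
    exact_mod_cast (by omega : k ≤ 2 * (k - k / 2))
  nlinarith [h0 k]

lemma tendsto_of_tendsto_nat_mul {f : ℕ → ℝ} (h0 : ∀ k, 0 ≤ f k)
    (hf : Tendsto (fun k : ℕ => (k : ℝ) * f k) atTop (𝓝 0)) : Tendsto f atTop (𝓝 0) := by
  refine squeeze_zero' (Eventually.of_forall h0) ?_ hf
  filter_upwards [eventually_ge_atTop 1] with k hk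
  exact le_mul_of_one_le_left (h0 k) (by exact_mod_cast hk)

lemma tendsto_nat_mul_of_le_mul_prev {f g : ℕ → ℝ} (hf0 : ∀ k, 0 ≤ f k) (hg0 : ∀ k, 0 ≤ g k)
    (hf : Tendsto (fun k : ℕ => (k : ℝ) * f k) atTop (𝓝 0)) (C : ℝ)
    (hg : ∀ k, g (k + 1) ≤ C * f k) : Tendsto (fun k : ℕ => (k : ℝ) * g k) atTop (𝓝 0) := by
  rw [← tendsto_add_atTop_iff_nat 1]
  have hbound : Tendsto (fun k : ℕ => C * ((k : ℝ) * f k + f k)) atTop (𝓝 0) := by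
    simpa using (hf.add (tendsto_of_tendsto_nat_mul hf0 hf)).const_mul C
  refine squeeze_zero (fun k => mul_nonneg (Nat.cast_nonneg _) (hg0 _)) (fun k => ?_) hbound
  calc ((k + 1 : ℕ) : ℝ) * g (k + 1) ≤ ((k + 1 : ℕ) : ℝ) * (C * f k) := by gcongr; exact hg k
    _ = C * ((k : ℝ) * f k + f k) := by push_cast; ring

variable {F : Type*} [NormedAddCommGroup F] [InnerProductSpace ℝ F]

lemma norm_sub_smul_sub_sq_le {q w w₀ : F} {θ ε : ℝ} (hε : 0 ≤ ε) (hθ : θ ∈ Set.Icc ε (2 - ε))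
    (hq : ‖q‖ ^ 2 ≤ ⟪q, w - w₀⟫_ℝ) :
    ‖w - θ • q - w₀‖ ^ 2 ≤ ‖w - w₀‖ ^ 2 - ε * (2 - ε) * ‖q‖ ^ 2 := by
  rw [sub_right_comm, norm_sub_sq_real, real_inner_smul_right, norm_smul, mul_pow,
    Real.norm_eq_abs, sq_abs, real_inner_comm]
  nlinarith [hθ.1, hθ.2, mul_le_mul_of_nonneg_left hq (hε.trans hθ.1), sq_nonneg ‖q‖,
    mul_nonneg (sub_nonneg.mpr hθ.1) (sub_nonneg.mpr hθ.2)]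

lemma norm_sq_le_of_norm_sub_sq_le_neg_mul_inner {q q' : F} {θ : ℝ} (hθ0 : 0 < θ) (hθ2 : θ ≤ 2)
    (h : ‖q' - q‖ ^ 2 ≤ -θ * ⟪q' - q, q⟫_ℝ) : ‖q'‖ ^ 2 ≤ ‖q‖ ^ 2 := by
  have hq' : q' = q + (q' - q) := by abel
  rw [hq', norm_add_sq_real, real_inner_comm]
  nlinarith [sq_nonneg ‖q' - q‖]

/-- `hfix` and `hstep` are the firm nonexpansiveness of `w_k ↦ q_k`, which vanishes at `w₀`,
at the pairs `(w_k, w₀)` and `(w_{k+1}, w_k)`. -/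
theorem tendsto_nat_mul_norm_sq_of_relaxed {q w : ℕ → F} {w₀ : F} {θ : ℕ → ℝ} {ε : ℝ}
    (hε : 0 < ε) (hθ : ∀ k, θ k ∈ Set.Icc ε (2 - ε))
    (hw : ∀ k, w (k + 1) = w k - θ k • q k)
    (hfix : ∀ k, ‖q k‖ ^ 2 ≤ ⟪q k, w k - w₀⟫_ℝ)
    (hstep : ∀ k, ‖q (k + 1) - q k‖ ^ 2 ≤ ⟪q (k + 1) - q k, w (k + 1) - w k⟫_ℝ) :
    Tendsto (fun k : ℕ => (k : ℝ) * ‖q k‖ ^ 2) atTop (𝓝 0) := by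
  have hc : 0 < ε * (2 - ε) := mul_pos hε (by linarith [(hθ 0).1, (hθ 0).2])
  have hfejer (k : ℕ) : ‖w (k + 1) - w₀‖ ^ 2 ≤ ‖w k - w₀‖ ^ 2 - ε * (2 - ε) * ‖q k‖ ^ 2 := by
    rw [hw k]
    exact norm_sub_smul_sub_sq_le hε.le (hθ k) (hfix k)
  have hpartial (n : ℕ) :
      ε * (2 - ε) * ∑ k ∈ range n, ‖q k‖ ^ 2 + ‖w n - w₀‖ ^ 2 ≤ ‖w 0 - w₀‖ ^ 2 := by
    induction n with
    | zero => simp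
    | succ n ih => rw [sum_range_succ]; linarith [hfejer n]
  have hsummable : Summable fun k => ‖q k‖ ^ 2 := by
    refine summable_of_sum_range_le (c := ‖w 0 - w₀‖ ^ 2 / (ε * (2 - ε)))
      (fun k => sq_nonneg _) fun n => (le_div_iff₀' hc).mpr ?_
    linarith [hpartial n, sq_nonneg ‖w n - w₀‖]
  have hanti : Antitone fun k => ‖q k‖ ^ 2 := by
    refine antitone_nat_of_succ_le fun k => norm_sq_le_of_norm_sub_sq_le_neg_mul_inner
      (hε.trans_le (hθ k).1) (by linarith [(hθ k).2]) ?_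
    have h := hstep k
    rwa [hw k, sub_sub_cancel_left, inner_neg_right, real_inner_smul_right, ← neg_mul] at h
  exact tendsto_nat_mul_of_antitone_of_summable (fun k => sq_nonneg _) hanti hsummable

end Rate

section GraphDR

variable {H : Type*} [NormedAddCommGroup H] [InnerProductSpace ℝ H] {N : ℕ}
  {E E' : Finset (Fin N × Fin N)} {Z : Matrix (Fin N) (Fin (N - 1)) ℝ}

lemma sum_norm_sq_le_blockQuad_lapE_add_sigmaE_add_pE (hZ : Z * Z.transpose = lapE E')
    (hE : ∀ e ∈ E, e.1 ≠ e.2) (u : Fin N → H) :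
    ∑ t, ‖matVecH Z.transpose u t‖ ^ 2 ≤ blockQuad (lapE E' + sigmaE E' + pE E E') u := by
  rw [blockQuad_lapE_add_sigmaE_add_pE hZ hE]
  exact le_add_of_nonneg_right (sum_nonneg fun _ _ => sq_nonneg _)

lemma SumZerNonempty.exists_stationary {A : Fin N → H → Set H} (hzer : SumZerNonempty A)
    {K : Matrix (Fin N) (Fin (N - 1)) ℝ} (hK : K * Z.transpose = centering N)
    {M : Matrix (Fin N) (Fin N) ℝ} (hM : ∑ i, ∑ j, M i j = 0) (σ : ℝ) :
    ∃ (xs : H) (b : Fin N → H) (w₀ : Fin (N - 1) → H),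
      (∀ i, b i ∈ A i xs) ∧ matVecH M (fun _ => xs) + σ • b = matVecH Z w₀ := by
  obtain ⟨xs, b, hb, hbsum⟩ := hzer
  have hsum : ∑ i, (matVecH M (fun _ => xs) + σ • b) i = 0 := by
    simp [sum_add_distrib, matVecH_const, ← sum_smul, hM, ← smul_sum, hbsum]
  exact ⟨xs, b, _, hb, (matVecH_matVecH_transpose_of_sum_eq_zero hK hsum).symm⟩

theorem IsGDR.tendsto_nat_mul_sum_norm_sq {A : Fin N → H → Set H} {σ : ℝ} {θ : ℕ → ℝ}
    {x a : ℕ → Fin N → H} {w : ℕ → Fin (N - 1) → H} (hiter : IsGDR E E' Z A σ θ x a w)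
    (hZ : ZOnto E' Z) (hE : ∀ e ∈ E, e.1 ≠ e.2) {K : Matrix (Fin N) (Fin (N - 1)) ℝ}
    (hK : K * Z.transpose = centering N) (hA : ∀ i, IsMonotoneOp (A i))
    (hzer : SumZerNonempty A) (hσ : 0 ≤ σ) {ε : ℝ} (hε : 0 < ε)
    (hθ : ∀ k, θ k ∈ Set.Icc ε (2 - ε)) :
    Tendsto (fun k : ℕ => (k : ℝ) * ∑ t, ‖matVecH Z.transpose (x (k + 1)) t‖ ^ 2) atTop (𝓝 0) := by
  obtain ⟨xs, b, w₀, hb, hstat⟩ :=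
    hzer.exists_stationary hK (sum_sum_lapE_add_sigmaE_add_pE_eq_zero hZ hE) σ
  have hquad := sum_norm_sq_le_blockQuad_lapE_add_sigmaE_add_pE (H := H) hZ.1 hE
  set q : ℕ → WithLp 2 (Fin (N - 1) → H) :=
    fun k => WithLp.toLp 2 (matVecH Z.transpose (x (k + 1)))
  have hupd (k : ℕ) : WithLp.toLp 2 (w (k + 1)) = WithLp.toLp 2 (w k) - θ k • q k := by
    rw [hiter.upd k]
    rfl
  have hfix (k : ℕ) : ‖q k‖ ^ 2 ≤ ⟪q k, WithLp.toLp 2 (w k) - WithLp.toLp 2 w₀⟫_ℝ := by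
    have h := norm_sq_le_inner_of_resolvent hA hσ hquad (hiter.mem k) hb (hiter.res k) hstat
    rwa [KerTransposeEqConst.matVecH_transpose_const hZ.2, WithLp.toLp_zero, sub_zero] at h
  have hstep (k : ℕ) : ‖q (k + 1) - q k‖ ^ 2
      ≤ ⟪q (k + 1) - q k, WithLp.toLp 2 (w (k + 1)) - WithLp.toLp 2 (w k)⟫_ℝ :=
    norm_sq_le_inner_of_resolvent hA hσ hquad (hiter.mem (k + 1)) (hiter.mem k)
      (hiter.res (k + 1)) (hiter.res k)
  simpa only [q, PiLp.norm_sq_eq_of_L2] using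
    tendsto_nat_mul_norm_sq_of_relaxed hε hθ hupd hfix hstep

end GraphDR

theorem graphDRS_variance_rate_general
    {H : Type*} [NormedAddCommGroup H] [InnerProductSpace ℝ H]
    (N : ℕ) (hN : 2 ≤ N) (E E' : Finset (Fin N × Fin N)) (hbi : IsBilevel E E')
    (Z : Matrix (Fin N) (Fin (N - 1)) ℝ) (hZ : ZOnto E' Z)
    (A : Fin N → H → Set H) (hA : ∀ i, IsMaxMonotone (A i))
    (hzer : SumZerNonempty A)
    (σ : ℝ) (hσ : 0 < σ)
    (ε : ℝ) (hε0 : 0 < ε)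
    (θ : ℕ → ℝ) (hθ : ∀ k, θ k ∈ Set.Icc ε (2 - ε))
    (x a : ℕ → Fin N → H) (w : ℕ → Fin (N - 1) → H)
    (hiter : IsGDR E E' Z A σ θ x a w) :
    Tendsto (fun k : ℕ => (k : ℝ) * stateVar (x k)) atTop (𝓝 0) ∧
    Tendsto (fun k : ℕ => (k : ℝ) * ‖∑ i, a k i‖ ^ 2) atTop (𝓝 0) ∧
    Tendsto (fun k : ℕ => ∑ i, a k i) atTop (𝓝 (0 : H)) := by
  have hE : ∀ e ∈ E, e.1 ≠ e.2 := fun e he => (hbi.topo e he).ne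
  obtain ⟨K, hK⟩ := exists_mul_transpose_eq_centering (by omega) hZ.2
  have hrate := hiter.tendsto_nat_mul_sum_norm_sq hZ hE hK (fun i => (hA i).1) hzer hσ.le hε0 hθ
  have hres_nonneg (k : ℕ) : 0 ≤ ∑ t, ‖matVecH Z.transpose (x (k + 1)) t‖ ^ 2 :=
    sum_nonneg fun _ _ => sq_nonneg _
  have hsum : Tendsto (fun k : ℕ => (k : ℝ) * ‖∑ i, a k i‖ ^ 2) atTop (𝓝 0) :=
    tendsto_nat_mul_of_le_mul_prev hres_nonneg (fun k => sq_nonneg _) hrate _ fun k =>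
      norm_sum_sq_le_of_resolvent hZ.2 hK (sum_sum_lapE_add_sigmaE_add_pE_eq_zero hZ hE) hσ
        (hiter.res k)
  refine ⟨tendsto_nat_mul_of_le_mul_prev hres_nonneg (fun k => stateVar_nonneg _) hrate _
    fun k => stateVar_le hK _, hsum, ?_⟩
  have hnorm := (tendsto_of_tendsto_nat_mul (fun k => sq_nonneg _) hsum).sqrt
  simp only [Real.sqrt_sq (norm_nonneg _), Real.sqrt_zero] at hnorm
  exact tendsto_zero_iff_norm_tendsto_zero.mpr hnorm

/-- With relaxation parameters `θ_k ∈ [ε, 2 − ε]`, the graph-based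
Douglas–Rachford iteration satisfies `Var(x^k) = o(k^{−1})` and `‖∑_i a_i^k‖² = o(k^{−1})`;
in particular `∑_i a_i^k` converges strongly to `0`. -/
theorem graphDRS_variance_rate
    {H : Type*} [NormedAddCommGroup H] [InnerProductSpace ℝ H] [CompleteSpace H]
    (N : ℕ) (hN : 2 ≤ N) (E E' : Finset (Fin N × Fin N)) (hbi : IsBilevel E E')
    (Z : Matrix (Fin N) (Fin (N - 1)) ℝ) (hZ : ZOnto E' Z)
    (A : Fin N → H → Set H) (hA : ∀ i, IsMaxMonotone (A i))
    (hzer : SumZerNonempty A)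
    (σ : ℝ) (hσ : 0 < σ)
    (ε : ℝ) (hε0 : 0 < ε) (hε1 : ε < 1)
    (θ : ℕ → ℝ) (hθ : ∀ k, θ k ∈ Set.Icc ε (2 - ε))
    (x a : ℕ → Fin N → H) (w : ℕ → Fin (N - 1) → H)
    (hiter : IsGDR E E' Z A σ θ x a w) :
    Tendsto (fun k : ℕ => (k : ℝ) * stateVar (x k)) atTop (𝓝 0) ∧
    Tendsto (fun k : ℕ => (k : ℝ) * ‖∑ i, a k i‖ ^ 2) atTop (𝓝 0) ∧
    Tendsto (fun k : ℕ => ∑ i, a k i) atTop (𝓝 (0 : H)) :=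
  graphDRS_variance_rate_general N hN E E' hbi Z hZ A hA hzer σ hσ ε hε0 θ hθ x a w hiter
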